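/- The mellow-max Bellman operator is a γ-contraction: define, for ω > 0, [T_ω(q)](s,a) = c(s,a) + γ ∑_{s⁺} P(s⁺|s,a) · mm_ω(q(s⁺,·)), where mm_ω(x) = −(1/ω) log((1/|A|) ∑_{a} e^{−ω x(a)}). Then for all q, q' ∈ ℝ^{S×A}, ‖T_ω(q) − T_ω(q')‖_∞ ≤ γ ‖q − q'‖_∞, and hence T_ω has a unique fixed point. -/

import Mathlib

/-!
Mellowmax is monotone and commutes with adding a constant to every coordinate, and any such
functional is 1-Lipschitz for the sup norm. The Bellman operator averages these values with
stochastic weights and scales them by `γ`, so it is a `γ`-contraction, and Banach's fixed point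
theorem applies.
-/

open Finset

theorem lipschitzWith_one_of_monotone_of_map_add_const {ι : Type*} [Fintype ι]
    {f : (ι → ℝ) → ℝ} (hmono : Monotone f) (hadd : ∀ x d, f (fun i => x i + d) = f x + d) :
    LipschitzWith 1 f := by
  refine LipschitzWith.of_le_add fun x y => ?_
  have hxy : x ≤ fun i => y i + dist x y := fun i => by
    have := dist_le_pi_dist x y i
    rw [Real.dist_eq] at this
    linarith [le_abs_self (x i - y i)]
  exact (hmono hxy).trans_eq (hadd y _)

section Mellowmax

variable {A : Type*} [Fintype A]

noncomputable def mellowmax (ω : ℝ) (x : A → ℝ) : ℝ :=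
  -(1 / ω) * Real.log ((1 / (Fintype.card A : ℝ)) * ∑ a, Real.exp (-ω * x a))

variable [Nonempty A]

theorem mean_exp_pos (ω : ℝ) (x : A → ℝ) :
    0 < (1 / (Fintype.card A : ℝ)) * ∑ a, Real.exp (-ω * x a) := by
  have : (0 : ℝ) < Fintype.card A := by exact_mod_cast Fintype.card_pos
  have : 0 < ∑ a, Real.exp (-ω * x a) := sum_pos (fun a _ => Real.exp_pos _) univ_nonempty
  positivity

theorem mellowmax_add_const {ω : ℝ} (hω : ω ≠ 0) (x : A → ℝ) (d : ℝ) :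
    mellowmax ω (fun a => x a + d) = mellowmax ω x + d := by
  have hsum : (1 / (Fintype.card A : ℝ)) * ∑ a, Real.exp (-ω * (x a + d))
      = Real.exp (-ω * d) * ((1 / (Fintype.card A : ℝ)) * ∑ a, Real.exp (-ω * x a)) := by
    rw [mul_left_comm, mul_sum (s := univ) (a := Real.exp (-ω * d))]
    simp only [← Real.exp_add, mul_add, add_comm]
  rw [mellowmax, mellowmax, hsum, Real.log_mul (Real.exp_ne_zero _) (mean_exp_pos ω x).ne',
    Real.log_exp]
  field_simp
  ring

theorem mellowmax_mono {ω : ℝ} (hω : 0 < ω) : Monotone (mellowmax ω : (A → ℝ) → ℝ) := by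
  intro x y hxy
  have hmean : (1 / (Fintype.card A : ℝ)) * ∑ a, Real.exp (-ω * y a)
      ≤ (1 / (Fintype.card A : ℝ)) * ∑ a, Real.exp (-ω * x a) := by
    refine mul_le_mul_of_nonneg_left (sum_le_sum fun a _ => Real.exp_le_exp.2 ?_) (by positivity)
    nlinarith [hxy a]
  have hcoef : -(1 / ω) ≤ 0 := by simp only [one_div, neg_nonpos, inv_nonneg, hω.le]
  exact mul_le_mul_of_nonpos_left (Real.log_le_log (mean_exp_pos ω y) hmean) hcoef

theorem lipschitzWith_mellowmax {ω : ℝ} (hω : 0 < ω) :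
    LipschitzWith 1 (mellowmax ω : (A → ℝ) → ℝ) :=
  lipschitzWith_one_of_monotone_of_map_add_const (mellowmax_mono hω)
    (mellowmax_add_const hω.ne')

end Mellowmax

theorem abs_sum_mul_le_of_stochastic {ι : Type*} [Fintype ι] {p u : ι → ℝ} {r : ℝ}
    (hp0 : ∀ i, 0 ≤ p i) (hp1 : ∑ i, p i = 1) (hu : ∀ i, |u i| ≤ r) :
    |∑ i, p i * u i| ≤ r :=
  calc |∑ i, p i * u i| ≤ ∑ i, |p i * u i| := abs_sum_le_sum_abs _ _
    _ ≤ ∑ i, p i * r := sum_le_sum fun i _ => by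
        rw [abs_mul, abs_of_nonneg (hp0 i)]
        exact mul_le_mul_of_nonneg_left (hu i) (hp0 i)
    _ = r := by rw [← sum_mul, hp1, one_mul]

section Bellman

variable {S A : Type*} [Fintype S] [Fintype A]

def bellmanOp (P : S → A → S → ℝ) (c : S → A → ℝ) (γ : ℝ) (f : (A → ℝ) → ℝ)
    (q : S × A → ℝ) : S × A → ℝ :=
  fun sa => c sa.1 sa.2 + γ * ∑ s', P sa.1 sa.2 s' * f (fun a' => q (s', a'))

theorem norm_bellmanOp_sub_le {P : S → A → S → ℝ} (hP0 : ∀ s a s', 0 ≤ P s a s')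
    (hP1 : ∀ s a, ∑ s', P s a s' = 1) (c : S → A → ℝ) {γ : ℝ} (hγ0 : 0 ≤ γ)
    {f : (A → ℝ) → ℝ} (hf : LipschitzWith 1 f) (q q' : S × A → ℝ) :
    ‖bellmanOp P c γ f q - bellmanOp P c γ f q'‖ ≤ γ * ‖q - q'‖ := by
  refine (pi_norm_le_iff_of_nonneg (by positivity)).2 fun ⟨s, a⟩ => ?_
  have hrow : ∀ s', |f (fun a' => q (s', a')) - f (fun a' => q' (s', a'))| ≤ ‖q - q'‖ :=
    fun s' => by
      rw [← Real.dist_eq, ← dist_eq_norm]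
      refine hf.dist_le_mul_of_le ?_ |>.trans_eq (one_mul _)
      exact (dist_pi_le_iff dist_nonneg).2 fun a' => dist_le_pi_dist q q' (s', a')
  have hdiff : bellmanOp P c γ f q (s, a) - bellmanOp P c γ f q' (s, a)
      = γ * ∑ s', P s a s' * (f (fun a' => q (s', a')) - f (fun a' => q' (s', a'))) := by
    simp only [bellmanOp, mul_sub, sum_sub_distrib]
    ring
  rw [Pi.sub_apply, Real.norm_eq_abs, hdiff, abs_mul, abs_of_nonneg hγ0]
  exact mul_le_mul_of_nonneg_left (abs_sum_mul_le_of_stochastic (hP0 s a) (hP1 s a) hrow) hγ0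

end Bellman

theorem mellowmax_bellman_contraction_general
    {S A : Type*} [Fintype S] [Fintype A] [Nonempty A]
    (P : S → A → S → ℝ) (hP0 : ∀ s a s', 0 ≤ P s a s')
    (hP1 : ∀ s a, ∑ s', P s a s' = 1)
    (c : S → A → ℝ) (γ : ℝ) (hγ0 : 0 ≤ γ) (hγ1 : γ < 1)
    (ω : ℝ) (hω : 0 < ω)
    (mm : (A → ℝ) → ℝ)
    (hmm : ∀ x : A → ℝ, mm x =
      -(1 / ω) * Real.log ((1 / (Fintype.card A : ℝ)) * ∑ a, Real.exp (-ω * x a)))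
    (Tω : (S × A → ℝ) → (S × A → ℝ))
    (hTω : ∀ (q : S × A → ℝ) (s : S) (a : A),
      Tω q (s, a) = c s a + γ * ∑ s', P s a s' * mm (fun a' => q (s', a'))) :
    (∀ q q' : S × A → ℝ, ‖Tω q - Tω q'‖ ≤ γ * ‖q - q'‖) ∧
    (∃! qω : S × A → ℝ, Tω qω = qω) := by
  have hmm' : mm = mellowmax ω := funext hmm
  have hT : Tω = bellmanOp P c γ mm := funext fun q => funext fun ⟨s, a⟩ => hTω q s a
  have hcontr : ∀ q q', ‖Tω q - Tω q'‖ ≤ γ * ‖q - q'‖ := by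
    rw [hT, hmm']
    exact norm_bellmanOp_sub_le hP0 hP1 c hγ0 (lipschitzWith_mellowmax hω)
  have hC : ContractingWith ⟨γ, hγ0⟩ Tω :=
    ⟨by exact_mod_cast hγ1, LipschitzWith.of_dist_le_mul fun q q' => by
      rw [dist_eq_norm, dist_eq_norm]
      exact hcontr q q'⟩
  exact ⟨hcontr, _, hC.fixedPoint_isFixedPt, fun _ hq => hC.fixedPoint_unique hq⟩

/-- The mellow-max Bellman operator is a γ-contraction in sup norm,
and hence has a unique fixed point. -/
theorem mellowmax_bellman_contraction
    {S A : Type*} [Fintype S] [Fintype A] [Nonempty S] [Nonempty A]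
    (P : S → A → S → ℝ) (hP0 : ∀ s a s', 0 ≤ P s a s')
    (hP1 : ∀ s a, ∑ s', P s a s' = 1)
    (c : S → A → ℝ) (γ : ℝ) (hγ0 : 0 ≤ γ) (hγ1 : γ < 1)
    (ω : ℝ) (hω : 0 < ω)
    (mm : (A → ℝ) → ℝ)
    (hmm : ∀ x : A → ℝ, mm x =
      -(1 / ω) * Real.log ((1 / (Fintype.card A : ℝ)) * ∑ a, Real.exp (-ω * x a)))
    (Tω : (S × A → ℝ) → (S × A → ℝ))
    (hTω : ∀ (q : S × A → ℝ) (s : S) (a : A),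
      Tω q (s, a) = c s a + γ * ∑ s', P s a s' * mm (fun a' => q (s', a'))) :
    (∀ q q' : S × A → ℝ, ‖Tω q - Tω q'‖ ≤ γ * ‖q - q'‖) ∧
    (∃! qω : S × A → ℝ, Tω qω = qω) :=
  mellowmax_bellman_contraction_general P hP0 hP1 c γ hγ0 hγ1 ω hω mm hmm Tω hTω
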